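/- In H(n,k,p_n) with λ_n = (1/2)(log n + log log n) + w for fixed w ∈ ℝ and k ≥ 3, the expected number of triples of distinct vertices with identical nonempty stars is O(n λ_n e^{−3λ_n}) = O(n^{−1/2}(log n)^{−1/2}), hence tends to 0; consequently the probability that some unit has size at least 3 tends to 0. -/

import Mathlib

/-!
A set `P` of three vertices lies in one unit only if some edge `e ⊇ P` is present and every
edge meeting `P` in exactly one vertex is absent. There are at most `n^(k-3)` choices of `e`
and at least `3 C(n-3,k-1)` edges of the second kind, so by independence and the union bound
`E[#triples] ≤ C(n,3) n^(k-3) p (1-p)^(3 C(n-3,k-1))`. Since `C(n-3,k-1) ≈ C(n-1,k-1)`, this is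
`O(n λ e^(-3λ))`, which for `λ = (log n + log log n)/2 + w` is `O(λ n^(-1/2) (log n)^(-3/2))`.
Markov's inequality turns the bound on the expectation into one on the probability.
-/

/-- All `k`-element subsets of `[n]`, the possible hyperedges of a `k`-uniform
hypergraph on `n` vertices. -/
def kSets (n k : ℕ) : Finset (Finset (Fin n)) :=
  (Finset.univ : Finset (Fin n)).powersetCard k

/-- The probability, in the random hypergraph `H(n,k,p)` where each `k`-subset is a
hyperedge independently with probability `p`, of a given edge set `E`. -/
noncomputable def hweight (n k : ℕ) (p : ℝ) (E : Finset (Finset (Fin n))) : ℝ :=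
  if E ⊆ kSets n k then p ^ E.card * (1 - p) ^ ((kSets n k).card - E.card) else 0

open Classical in
/-- The probability of an event `A` under `H(n,k,p)`. -/
noncomputable def hprob (n k : ℕ) (p : ℝ) (A : Finset (Finset (Fin n)) → Prop) : ℝ :=
  ∑ E : Finset (Finset (Fin n)), if A E then hweight n k p E else 0

/-- The expectation of a random variable `f` under `H(n,k,p)`. -/
noncomputable def hexp (n k : ℕ) (p : ℝ) (f : Finset (Finset (Fin n)) → ℝ) : ℝ :=
  ∑ E : Finset (Finset (Fin n)), hweight n k p E * f E

/-- The star of a vertex `v`: the set of hyperedges of `E` containing `v`. -/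
def hstar {n : ℕ} (E : Finset (Finset (Fin n))) (v : Fin n) : Finset (Finset (Fin n)) :=
  E.filter (fun e => v ∈ e)

/-- `X_r`: the number of unordered pairs of (distinct) vertices with identical stars of
size exactly `r` (star-collisions of support size `r`). -/
def Xr (n r : ℕ) (E : Finset (Finset (Fin n))) : ℕ :=
  ((Finset.univ : Finset (Fin n)).powersetCard 2 |>.filter
    (fun P => (∀ u ∈ P, ∀ v ∈ P, hstar E u = hstar E v) ∧
      ∀ u ∈ P, (hstar E u).card = r)).card

open Filter Asymptotics

/-- The number of 3-element sets of vertices all having the same nonempty star. -/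
def tripleCount (n : ℕ) (E : Finset (Finset (Fin n))) : ℕ :=
  ((Finset.univ : Finset (Fin n)).powersetCard 3 |>.filter
    (fun P => (∀ u ∈ P, ∀ v ∈ P, hstar E u = hstar E v) ∧
      ∀ u ∈ P, hstar E u ≠ ∅)).card

open Finset

section RandomHypergraph

variable {n k : ℕ} {p : ℝ}

lemma hweight_nonneg (hp0 : 0 ≤ p) (hp1 : p ≤ 1) (E : Finset (Finset (Fin n))) :
    0 ≤ hweight n k p E := by
  unfold hweight
  split_ifs
  · exact mul_nonneg (pow_nonneg hp0 _) (pow_nonneg (sub_nonneg.2 hp1) _)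
  · exact le_rfl

lemma hweight_eq_zero {E : Finset (Finset (Fin n))} (hE : ¬E ⊆ kSets n k) :
    hweight n k p E = 0 :=
  if_neg hE

lemma hprob_nonneg (hp0 : 0 ≤ p) (hp1 : p ≤ 1) (A : Finset (Finset (Fin n)) → Prop) :
    0 ≤ hprob n k p A := by
  refine sum_nonneg fun E _ => ?_
  split_ifs
  exacts [hweight_nonneg hp0 hp1 E, le_rfl]

lemma hexp_nonneg (hp0 : 0 ≤ p) (hp1 : p ≤ 1) {f : Finset (Finset (Fin n)) → ℝ}
    (hf : ∀ E, 0 ≤ f E) : 0 ≤ hexp n k p f :=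
  sum_nonneg fun E _ => mul_nonneg (hweight_nonneg hp0 hp1 E) (hf E)

lemma hprob_one_le_le_hexp (hp0 : 0 ≤ p) (hp1 : p ≤ 1) (X : Finset (Finset (Fin n)) → ℕ) :
    hprob n k p (fun E => 1 ≤ X E) ≤ hexp n k p (fun E => (X E : ℝ)) := by
  refine sum_le_sum fun E _ => ?_
  have hw := hweight_nonneg (k := k) hp0 hp1 E
  split_ifs with hX
  · exact le_mul_of_one_le_right hw (show (1 : ℝ) ≤ X E by exact_mod_cast hX)
  · positivity

lemma hprob_le_sum_hprob (hp0 : 0 ≤ p) (hp1 : p ≤ 1) {ι : Type*} (T : Finset ι)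
    (A : Finset (Finset (Fin n)) → Prop) (Φ : ι → Finset (Finset (Fin n)) → Prop)
    (h : ∀ E ⊆ kSets n k, A E → ∃ i ∈ T, Φ i E) :
    hprob n k p A ≤ ∑ i ∈ T, hprob n k p (Φ i) := by
  classical
  unfold hprob
  rw [sum_comm]
  refine sum_le_sum fun E _ => ?_
  have hterm : ∀ i ∈ T, 0 ≤ if Φ i E then hweight n k p E else 0 :=
    fun i _ => ite_nonneg (hweight_nonneg hp0 hp1 E) le_rfl
  by_cases hAE : A E
  · by_cases hEK : E ⊆ kSets n k
    · obtain ⟨i, hi, hΦ⟩ := h E hEK hAE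
      simpa [hAE, hΦ] using single_le_sum hterm hi
    · simp [hweight_eq_zero hEK]
  · simpa [hAE] using sum_nonneg hterm

lemma hexp_card_filter {β : Type*} (S : Finset β) (Q : β → Finset (Finset (Fin n)) → Prop)
    [∀ E, DecidablePred (Q · E)] :
    hexp n k p (fun E => (#{P ∈ S | Q P E} : ℝ)) = ∑ P ∈ S, hprob n k p (Q P) := by
  unfold hexp hprob
  rw [sum_comm]
  refine sum_congr rfl fun E _ => ?_
  simp only [card_filter, Nat.cast_sum, mul_sum]
  refine sum_congr rfl fun P _ => ?_
  split_ifs <;> simp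

lemma hprob_subset_disjoint {A B : Finset (Finset (Fin n))} (hA : A ⊆ kSets n k)
    (hB : B ⊆ kSets n k) (hAB : Disjoint A B) :
    hprob n k p (fun E => A ⊆ E ∧ Disjoint B E) = p ^ #A * (1 - p) ^ #B := by
  classical
  set K := kSets n k
  set T := (K \ B) \ A
  have hAKB : A ⊆ K \ B := subset_sdiff.2 ⟨hA, hAB⟩
  have hevent : ∀ E, (if A ⊆ E ∧ Disjoint B E then hweight n k p E else 0)
      = if E ∈ Icc A (K \ B) then hweight n k p E else 0 := by
    intro E
    by_cases hEK : E ⊆ K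
    · simp [mem_Icc, subset_sdiff, hEK, disjoint_comm]
    · have hE : E ∉ Icc A (K \ B) := fun h => hEK ((mem_Icc.1 h).2.trans sdiff_subset)
      simp [hE, hweight_eq_zero hEK]
  have hweight_union : ∀ F ∈ T.powerset, hweight n k p (A ∪ F)
      = p ^ #A * (1 - p) ^ #B * (p ^ #F * (1 - p) ^ (#T - #F)) := by
    intro F hF
    rw [mem_powerset, subset_sdiff, subset_sdiff] at hF
    obtain ⟨⟨hFK, hFB⟩, hFA⟩ := hF
    have hcard : #(A ∪ F) = #A + #F := card_union_of_disjoint hFA.symm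
    have hKBA : #T = #K - #B - #A := by
      rw [card_sdiff_of_subset hAKB, card_sdiff_of_subset hB]
    have hAB' : #A + #B ≤ #K := (card_union_of_disjoint hAB).symm.trans_le
      (card_le_card (union_subset hA hB))
    have hF' : #F + #A + #B ≤ #K := by
      have := card_le_card (union_subset (union_subset hFK hA) hB)
      rwa [card_union_of_disjoint (disjoint_union_left.2 ⟨hFB, hAB⟩),
        card_union_of_disjoint hFA] at this
    rw [hweight, if_pos (union_subset hA hFK), hcard,
      show #K - (#A + #F) = (#K - #B - #A - #F) + #B by omega, hKBA]
    ring
  have hinj : Set.InjOn (A ∪ ·) (T.powerset : Set (Finset (Finset (Fin n)))) := by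
    intro F hF G hG hFG
    have hdisj : ∀ F ∈ T.powerset, Disjoint A F := fun F hF =>
      (sdiff_disjoint.mono_left (mem_powerset.1 hF)).symm
    rw [← union_sdiff_cancel_left (hdisj F hF), ← union_sdiff_cancel_left (hdisj G hG)]
    exact congrArg (· \ A) hFG
  rw [hprob, sum_congr rfl fun E _ => by convert hevent E, sum_ite_mem, univ_inter,
    Icc_eq_image_powerset hAKB, sum_image hinj,
    sum_congr rfl hweight_union, ← mul_sum, sum_pow_mul_eq_add_pow, add_sub_cancel, one_pow,
    mul_one]

end RandomHypergraph

section Stars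

variable {n k : ℕ}

lemma card_filter_superset_le (P : Finset (Fin n)) :
    #{e ∈ kSets n k | P ⊆ e} ≤ n.choose (k - #P) := by
  have h := card_le_card_of_injOn (· \ P) (s := {e ∈ kSets n k | P ⊆ e})
    (t := powersetCard (k - #P) (univ : Finset (Fin n)))
    (fun e he => by
      simp only [mem_coe, mem_filter, kSets, mem_powersetCard] at he
      simp [card_sdiff_of_subset he.2, he.1.2])
    (fun e he f hf hef => by
      simp only [mem_coe, mem_filter] at he hf
      rw [← sdiff_union_of_subset he.2, ← sdiff_union_of_subset hf.2]
      exact congrArg (· ∪ P) hef)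
  simpa using h

lemma card_mul_choose_le_card_filter_card_inter_eq_one (hk : 1 ≤ k) (P : Finset (Fin n)) :
    #P * (n - #P).choose (k - 1) ≤ #{e ∈ kSets n k | #(e ∩ P) = 1} := by
  have hinter : ∀ x ∈ P, ∀ t ⊆ Pᶜ, insert x t ∩ P = {x} := fun x hx t ht => by
    rw [insert_inter_of_mem hx, disjoint_iff_inter_eq_empty.1 (subset_compl_iff_disjoint_right.1 ht)]
    rfl
  have h := card_le_card_of_injOn (fun xt => insert xt.1 xt.2)
    (s := P ×ˢ powersetCard (k - 1) Pᶜ) (t := {e ∈ kSets n k | #(e ∩ P) = 1})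
    (fun ⟨x, t⟩ hxt => by
      simp only [mem_coe, mem_product, mem_powersetCard] at hxt
      obtain ⟨hx, htP, ht⟩ := hxt
      have hxt : x ∉ t := fun h => (mem_compl.1 (htP h)) hx
      simp [kSets, card_insert_of_notMem hxt, ht, Nat.sub_add_cancel hk, hinter x hx t htP])
    (fun ⟨x, t⟩ hxt ⟨y, s⟩ hys hxy => by
      simp only [mem_coe, mem_product, mem_powersetCard] at hxt hys
      have hxy' : x = y := by
        simpa [hinter x hxt.1 t hxt.2.1, hinter y hys.1 s hys.2.1] using congrArg (· ∩ P) hxy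
      subst hxy'
      have hxt' : x ∉ t := fun h => (mem_compl.1 (hxt.2.1 h)) hxt.1
      have hxs' : x ∉ s := fun h => (mem_compl.1 (hys.2.1 h)) hxt.1
      simpa [erase_insert hxt', erase_insert hxs'] using congrArg (Finset.erase · x) hxy)
  simpa [card_compl] using h

lemma superset_of_mem_of_hstar_eq {E : Finset (Finset (Fin n))} {P : Finset (Fin n)}
    (hsame : ∀ u ∈ P, ∀ v ∈ P, hstar E u = hstar E v) {f : Finset (Fin n)} (hf : f ∈ E)
    {u : Fin n} (hu : u ∈ P) (huf : u ∈ f) : P ⊆ f := by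
  intro v hv
  have hfv : f ∈ hstar E v := hsame u hu v hv ▸ mem_filter.2 ⟨hf, huf⟩
  exact (mem_filter.1 hfv).2

end Stars

section Units

variable {n k : ℕ} {p : ℝ}

/-- For `P` to lie in one unit, some edge `e ⊇ P` must be present, while every edge meeting `P`
in a single vertex must be absent. -/
lemma hprob_hstar_eq_le (hp0 : 0 ≤ p) (hp1 : p ≤ 1) (hk : 1 ≤ k) {P : Finset (Fin n)}
    (hP : 2 ≤ #P) :
    hprob n k p (fun E => (∀ u ∈ P, ∀ v ∈ P, hstar E u = hstar E v) ∧ ∀ u ∈ P, hstar E u ≠ ∅)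
      ≤ n.choose (k - #P) * (p * (1 - p) ^ (#P * (n - #P).choose (k - 1))) := by
  set T := {e ∈ kSets n k | P ⊆ e}
  set S := {e ∈ kSets n k | #(e ∩ P) = 1}
  have hcover : ∀ E ⊆ kSets n k,
      ((∀ u ∈ P, ∀ v ∈ P, hstar E u = hstar E v) ∧ ∀ u ∈ P, hstar E u ≠ ∅) →
      ∃ e ∈ T, {e} ⊆ E ∧ Disjoint S E := by
    rintro E hEK ⟨hsame, hne⟩
    obtain ⟨u, hu⟩ : P.Nonempty := card_pos.1 (by omega)
    obtain ⟨e, he⟩ := nonempty_iff_ne_empty.2 (hne u hu)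
    obtain ⟨heE, hue⟩ := mem_filter.1 he
    refine ⟨e, mem_filter.2 ⟨hEK heE, superset_of_mem_of_hstar_eq hsame heE hu hue⟩,
      singleton_subset_iff.2 heE, disjoint_left.2 fun f hfS hfE => ?_⟩
    obtain ⟨-, hf1⟩ := mem_filter.1 hfS
    obtain ⟨v, hv⟩ := card_eq_one.1 hf1
    have hvP : v ∈ f ∩ P := hv ▸ mem_singleton_self v
    rw [inter_eq_right.2 (superset_of_mem_of_hstar_eq hsame hfE (mem_inter.1 hvP).2
      (mem_inter.1 hvP).1)] at hf1
    omega
  have hedge : ∀ e ∈ T, hprob n k p (fun E => {e} ⊆ E ∧ Disjoint S E) = p * (1 - p) ^ #S := by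
    intro e he
    obtain ⟨heK, hPe⟩ := mem_filter.1 he
    have heS : e ∉ S := fun h => by
      rw [mem_filter, inter_eq_right.2 hPe] at h
      omega
    simpa using hprob_subset_disjoint (singleton_subset_iff.2 heK) (filter_subset _ _)
      (disjoint_singleton_left.2 heS)
  calc _ ≤ ∑ e ∈ T, hprob n k p (fun E => {e} ⊆ E ∧ Disjoint S E) :=
        hprob_le_sum_hprob hp0 hp1 T _ _ hcover
    _ = #T * (p * (1 - p) ^ #S) := by rw [sum_congr rfl hedge, sum_const, nsmul_eq_mul]
    _ ≤ _ := by
      have h1p : 0 ≤ 1 - p := sub_nonneg.2 hp1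
      refine mul_le_mul (by exact_mod_cast card_filter_superset_le P)
        (mul_le_mul_of_nonneg_left (pow_le_pow_of_le_one h1p (by linarith)
          (card_mul_choose_le_card_filter_card_inter_eq_one hk P)) hp0) (by positivity)
        (Nat.cast_nonneg _)

lemma hexp_tripleCount_le (hp0 : 0 ≤ p) (hp1 : p ≤ 1) (hk : 1 ≤ k) :
    hexp n k p (fun E => (tripleCount n E : ℝ))
      ≤ n.choose 3 * n.choose (k - 3) * (p * (1 - p) ^ (3 * (n - 3).choose (k - 1))) := by
  unfold tripleCount
  rw [hexp_card_filter]
  calc _ ≤ ∑ _P ∈ powersetCard 3 (univ : Finset (Fin n)),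
        n.choose (k - 3) * (p * (1 - p) ^ (3 * (n - 3).choose (k - 1))) :=
        sum_le_sum fun P hP => by
          have hP3 := (mem_powersetCard.1 hP).2
          simpa [hP3] using hprob_hstar_eq_le hp0 hp1 hk (hP3.symm ▸ (by norm_num) : 2 ≤ #P)
    _ = _ := by
      rw [sum_const, card_powersetCard, card_univ, Fintype.card_fin, nsmul_eq_mul, mul_assoc]

end Units

open Nat in
lemma pow_le_two_pow_mul_factorial_mul_choose {m r : ℕ} (h : 2 * r ≤ m + 1) :
    (m + 1) ^ r ≤ 2 ^ r * r ! * m.choose r :=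
  calc (m + 1) ^ r ≤ (2 * (m + 1 - r)) ^ r := Nat.pow_le_pow_left (by omega) r
    _ = 2 ^ r * (m + 1 - r) ^ r := mul_pow _ _ _
    _ ≤ 2 ^ r * m.descFactorial r := Nat.mul_le_mul_left _ (pow_sub_le_descFactorial m r)
    _ = 2 ^ r * r ! * m.choose r := by rw [descFactorial_eq_factorial_mul_choose, mul_assoc]

open Nat in
lemma choose_three_mul_choose_le {n k : ℕ} (hk : 3 ≤ k) (hn : 2 * k ≤ n + 2) :
    n.choose 3 * n.choose (k - 3) ≤ 2 ^ (k - 1) * (k - 1)! * (n - 1).choose (k - 1) * n := by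
  obtain ⟨m, rfl⟩ : ∃ m, n = m + 1 := ⟨n - 1, by omega⟩
  calc _ ≤ (m + 1) ^ 3 * (m + 1) ^ (k - 3) :=
        Nat.mul_le_mul (choose_le_pow _ _) (choose_le_pow _ _)
    _ = (m + 1) ^ (k - 1) * (m + 1) := by
        rw [← pow_add, ← pow_succ]
        congr 1
        omega
    _ ≤ _ := Nat.mul_le_mul_right _
        (by simpa using pow_le_two_pow_mul_factorial_mul_choose (by omega : 2 * (k - 1) ≤ m + 1))

lemma choose_le_choose_add_two_mul_choose (m j : ℕ) :
    (m + 2).choose (j + 1) ≤ m.choose (j + 1) + 2 * (m + 1).choose j := by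
  have h1 : (m + 2).choose (j + 1) = (m + 1).choose j + (m + 1).choose (j + 1) :=
    Nat.choose_succ_succ' _ _
  have h2 : (m + 1).choose (j + 1) = m.choose j + m.choose (j + 1) := Nat.choose_succ_succ' _ _
  have h3 : m.choose j ≤ (m + 1).choose j := Nat.choose_le_choose j (Nat.le_succ m)
  omega

/-- `C(n-1,k-1) ≤ C(n-3,k-1) + 2 C(n-2,k-2)`, and the error term
`2 p C(n-2,k-2) = 2 (k-1) λ / (n-1)` is at most `1/3`. -/
lemma three_mul_sub_one_le_mul_choose {n k : ℕ} {p lam : ℝ} (hk : 2 ≤ k) (hn : 3 ≤ n)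
    (hp0 : 0 ≤ p) (hlam : ((n - 1).choose (k - 1) : ℝ) * p = lam)
    (hsmall : 6 * ((k : ℝ) - 1) * lam ≤ n - 1) :
    3 * lam - 1 ≤ ((3 * (n - 3).choose (k - 1) : ℕ) : ℝ) * p := by
  obtain ⟨m, rfl⟩ : ∃ m, n = m + 3 := ⟨n - 3, by omega⟩
  obtain ⟨j, rfl⟩ : ∃ j, k = j + 2 := ⟨k - 2, by omega⟩
  simp only [show m + 3 - 1 = m + 2 by omega, show m + 3 - 3 = m by omega,
    show j + 2 - 1 = j + 1 by omega] at hlam ⊢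
  push_cast at hsmall ⊢
  have hpascal : ((m + 2).choose (j + 1) : ℝ) ≤ m.choose (j + 1) + 2 * (m + 1).choose j := by
    exact_mod_cast choose_le_choose_add_two_mul_choose m j
  have habsorb : ((m + 2 : ℕ) : ℝ) * (m + 1).choose j = (m + 2).choose (j + 1) * (j + 1) := by
    exact_mod_cast Nat.add_one_mul_choose_eq (m + 1) j
  push_cast at habsorb
  have hsmall_mul : (m + 2 : ℝ) * (p * (m + 1).choose j) ≤ (m + 2) * (1 / 6) := by
    nlinarith
  have herror : p * (m + 1).choose j ≤ 1 / 6 := le_of_mul_le_mul_left hsmall_mul (by positivity)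
  nlinarith

open Real

open Nat in
lemma hexp_tripleCount_le_mul_exp {n k : ℕ} {p lam : ℝ} (hk : 3 ≤ k) (hn : 2 * k ≤ n + 2)
    (hp0 : 0 ≤ p) (hp1 : p ≤ 1) (hlam : ((n - 1).choose (k - 1) : ℝ) * p = lam)
    (hsmall : 6 * ((k : ℝ) - 1) * lam ≤ n - 1) :
    hexp n k p (fun E => (tripleCount n E : ℝ))
      ≤ 2 ^ (k - 1) * (k - 1)! * exp 1 * (n * lam * exp (-(3 * lam))) := by
  set M := 3 * (n - 3).choose (k - 1)
  have h1p : 0 ≤ 1 - p := sub_nonneg.2 hp1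
  have habsent : (1 - p) ^ M ≤ exp (1 - 3 * lam) :=
    calc (1 - p) ^ M ≤ exp (-p) ^ M := pow_le_pow_left₀ h1p (one_sub_le_exp_neg p) M
      _ = exp (-(M * p)) := by rw [← exp_nat_mul, mul_neg]
      _ ≤ exp (1 - 3 * lam) := exp_le_exp.2 (by
          linarith [three_mul_sub_one_le_mul_choose (by omega) (by omega) hp0 hlam hsmall])
  have hchoose : (n.choose 3 * n.choose (k - 3) : ℝ)
      ≤ 2 ^ (k - 1) * (k - 1)! * (n - 1).choose (k - 1) * n := by
    exact_mod_cast choose_three_mul_choose_le hk hn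
  calc _ ≤ n.choose 3 * n.choose (k - 3) * (p * (1 - p) ^ M) :=
        hexp_tripleCount_le hp0 hp1 (by omega)
    _ ≤ 2 ^ (k - 1) * (k - 1)! * (n - 1).choose (k - 1) * n * (p * exp (1 - 3 * lam)) :=
        mul_le_mul hchoose (mul_le_mul_of_nonneg_left habsent hp0) (by positivity)
          (by positivity)
    _ = _ := by
        rw [← hlam, sub_eq_add_neg, exp_add]
        ring

lemma self_mul_exp_neg_three_mul_eq {x : ℝ} (hx : 0 < x) (hlogx : 0 < log x) (w : ℝ) :
    x * exp (-(3 * ((1 / 2) * (log x + log (log x)) + w)))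
      = exp (-(3 * w)) * (x ^ (-(1 / 2 : ℝ)) * log x ^ (-(3 / 2 : ℝ))) := by
  rw [rpow_def_of_pos hx, rpow_def_of_pos hlogx, ← exp_add, ← exp_add]
  nth_rw 1 [← exp_log hx]
  rw [← exp_add]
  congr 1
  ring

lemma mul_mul_exp_neg_three_mul_le {x w lam : ℝ} (hx : 0 < x) (hlogx : 0 < log x)
    (hlam : (1 / 2) * (log x + log (log x)) + w = lam) (hlamx : lam ≤ log x) :
    x * lam * exp (-(3 * lam)) ≤ exp (-(3 * w)) * (x ^ (-(1 / 2 : ℝ)) * log x ^ (-(1 / 2 : ℝ))) := by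
  have h := self_mul_exp_neg_three_mul_eq hx hlogx w
  rw [hlam] at h
  calc x * lam * exp (-(3 * lam))
      = lam * (exp (-(3 * w)) * (x ^ (-(1 / 2 : ℝ)) * log x ^ (-(3 / 2 : ℝ)))) := by
        rw [← h]
        ring
    _ ≤ log x * (exp (-(3 * w)) * (x ^ (-(1 / 2 : ℝ)) * log x ^ (-(3 / 2 : ℝ)))) := by
        gcongr
    _ = _ := by
        rw [show (-(1 / 2 : ℝ)) = 1 + -(3 / 2) by norm_num, rpow_add hlogx, rpow_one]
        ring

lemma eventually_mul_log_le_sub_one (c : ℝ) : ∀ᶠ x : ℝ in atTop, c * log x ≤ x - 1 := by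
  filter_upwards [(isLittleO_log_id_atTop.const_mul_left c).bound (by norm_num : (0 : ℝ) < 1 / 2),
    eventually_ge_atTop 2] with x hx hx2
  simp only [norm_mul, norm_eq_abs, id] at hx
  rw [abs_of_nonneg (by linarith : (0 : ℝ) ≤ x)] at hx
  nlinarith [le_abs_self (c * log x), abs_mul c (log x)]

lemma eventually_half_log_add_log_log_add_le_log (w : ℝ) :
    ∀ᶠ x : ℝ in atTop, (1 / 2) * (log x + log (log x)) + w ≤ log x := by
  have hloglog : ∀ᶠ y : ℝ in atTop, log y ≤ 1 / 2 * y := by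
    filter_upwards [isLittleO_log_id_atTop.bound (by norm_num : (0 : ℝ) < 1 / 2),
      eventually_ge_atTop 0] with y hy hy0
    simpa [abs_of_nonneg hy0] using (le_abs_self _).trans hy
  filter_upwards [tendsto_log_atTop.eventually hloglog,
    tendsto_log_atTop.eventually_ge_atTop (4 * w)] with x hx hx1
  linarith

/-- In `H(n,k,p_n)` with `λ_n = (1/2)(log n + log log n) + w`, the expected number of
triples of distinct vertices with identical nonempty stars is
`O(n^{-1/2} (log n)^{-1/2})`, hence tends to 0; consequently the probability that some
unit has size at least 3 tends to 0. -/
theorem stmt17 (k : ℕ) (hk : 3 ≤ k) (w : ℝ) (p : ℕ → ℝ)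
    (hp : ∀ᶠ n in atTop, 0 ≤ p n ∧ p n ≤ 1)
    (hlam : ∀ᶠ n in atTop, ((n - 1).choose (k - 1) : ℝ) * p n
      = (1 / 2) * (Real.log n + Real.log (Real.log n)) + w) :
    (fun n => hexp n k (p n) (fun E => (tripleCount n E : ℝ)))
        =O[atTop] (fun n => (n : ℝ) ^ (-(1 / 2 : ℝ)) * Real.log n ^ (-(1 / 2 : ℝ)))
    ∧ Tendsto (fun n => hexp n k (p n) (fun E => (tripleCount n E : ℝ)))
        atTop (nhds 0)
    ∧ Tendsto (fun n => hprob n k (p n) (fun E => 1 ≤ tripleCount n E))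
        atTop (nhds 0) := by
  set C := 2 ^ (k - 1) * (k - 1).factorial * exp 1 * exp (-(3 * w))
  set g : ℕ → ℝ := fun n => (n : ℝ) ^ (-(1 / 2 : ℝ)) * Real.log n ^ (-(1 / 2 : ℝ))
  have hbound : ∀ᶠ n : ℕ in atTop, 0 ≤ hexp n k (p n) (fun E => (tripleCount n E : ℝ)) ∧
      hexp n k (p n) (fun E => (tripleCount n E : ℝ)) ≤ C * g n := by
    filter_upwards [hp, hlam, eventually_ge_atTop (2 * k),
      tendsto_natCast_atTop_atTop.eventually (eventually_half_log_add_log_log_add_le_log w),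
      tendsto_natCast_atTop_atTop.eventually (eventually_mul_log_le_sub_one (6 * ((k : ℝ) - 1)))]
      with n ⟨hp0, hp1⟩ hlamn hn hlamlog hlogn
    have hk1 : (0 : ℝ) ≤ 6 * ((k : ℝ) - 1) := by
      have : (3 : ℝ) ≤ k := by exact_mod_cast hk
      linarith
    refine ⟨hexp_nonneg hp0 hp1 fun E => Nat.cast_nonneg _, ?_⟩
    calc _ ≤ 2 ^ (k - 1) * (k - 1).factorial * exp 1 * (n * _ * exp (-(3 * _))) :=
          hexp_tripleCount_le_mul_exp hk (by omega) hp0 hp1 hlamn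
            ((mul_le_mul_of_nonneg_left hlamlog hk1).trans hlogn)
      _ ≤ 2 ^ (k - 1) * (k - 1).factorial * exp 1 * (exp (-(3 * w)) * g n) := by
          refine mul_le_mul_of_nonneg_left ?_ (by positivity)
          exact mul_mul_exp_neg_three_mul_le (by exact_mod_cast (by omega : 0 < n))
            (log_pos (by exact_mod_cast (by omega : 1 < n))) rfl hlamlog
      _ = C * g n := by ring
  have hg : Tendsto g atTop (nhds 0) := by
    have h := tendsto_rpow_neg_atTop (by norm_num : (0 : ℝ) < 1 / 2)
    simpa [g] using (h.comp tendsto_natCast_atTop_atTop).mul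
      (h.comp (tendsto_log_atTop.comp tendsto_natCast_atTop_atTop))
  have hexp_tendsto := squeeze_zero' (hbound.mono fun _ h => h.1) (hbound.mono fun _ h => h.2)
    (by simpa using hg.const_mul C)
  refine ⟨IsBigO.of_bound C (hbound.mono fun n h => ?_), hexp_tendsto,
    squeeze_zero' (hp.mono fun n h => hprob_nonneg h.1 h.2 _)
      (hp.mono fun n h => hprob_one_le_le_hexp h.1 h.2 _) hexp_tendsto⟩
  rw [norm_of_nonneg h.1, norm_of_nonneg (by positivity)]
  exact h.2
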